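/- Let t > 0, λ > 0, η₁ > 1, η₂ > 0, and p, q > 0 with p + q = 1. Then the functions x ↦ H₁(t,x) and x ↦ H₂(t,1/x) are slowly varying with remainder g, where g(x) = (log x)^{−1/2}: for every λ' > 1, H₁(t,λ'x)/H₁(t,x) − 1 = O((log x)^{−1/2}) as x → ∞, and similarly for x ↦ H₂(t,1/x). -/

import Mathlib

open Filter Asymptotics MeasureTheory

set_option maxHeartbeats 1000000

/-- `P_{n,k}` from Kou's double exponential jump model: `P_{n,n} = p^n` and, for
`1 ≤ k ≤ n−1`,
`P_{n,k} = Σ_{i=k}^{n−1} C(n−k−1, i−k) C(n,i) (η₁/(η₁+η₂))^{i−k} (η₂/(η₁+η₂))^{n−i} p^i q^{n−i}`. -/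
noncomputable def Pcoef (η₁ η₂ p q : ℝ) (n k : ℕ) : ℝ :=
  if k = n then p ^ n
  else ∑ i ∈ Finset.Ico k n,
    ((n - k - 1).choose (i - k) : ℝ) * (n.choose i : ℝ) *
      (η₁ / (η₁ + η₂)) ^ (i - k) * (η₂ / (η₁ + η₂)) ^ (n - i) * p ^ i * q ^ (n - i)

/-- `Q_{n,k}` from Kou's double exponential jump model: `Q_{n,n} = q^n` and, for
`1 ≤ k ≤ n−1`,
`Q_{n,k} = Σ_{i=k}^{n−1} C(n−k−1, i−k) C(n,i) (η₁/(η₁+η₂))^{n−i} (η₂/(η₁+η₂))^{i−k} p^{n−i} q^i`. -/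
noncomputable def Qcoef (η₁ η₂ p q : ℝ) (n k : ℕ) : ℝ :=
  if k = n then q ^ n
  else ∑ i ∈ Finset.Ico k n,
    ((n - k - 1).choose (i - k) : ℝ) * (n.choose i : ℝ) *
      (η₁ / (η₁ + η₂)) ^ (n - i) * (η₂ / (η₁ + η₂)) ^ (i - k) * p ^ (n - i) * q ^ i

/-- The Poisson weights `π_n = e^{−λt} (λt)^n / n!`. -/
noncomputable def poisCoef (lam t : ℝ) (n : ℕ) : ℝ :=
  Real.exp (-(lam * t)) * (lam * t) ^ n / (n.factorial : ℝ)

/-- `a_k = (η₁^{k+1}/k!) Σ_{n=k+1}^∞ π_n P_{n,k+1}` (the series is reindexed by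
`n = m + (k+1)`, `m ≥ 0`). -/
noncomputable def aCoef (lam t η₁ η₂ p q : ℝ) (k : ℕ) : ℝ :=
  η₁ ^ (k + 1) / (k.factorial : ℝ) *
    ∑' m : ℕ, poisCoef lam t (m + (k + 1)) * Pcoef η₁ η₂ p q (m + (k + 1)) (k + 1)

/-- `b_k = (η₂^{k+1}/k!) Σ_{n=k+1}^∞ π_n Q_{n,k+1}` (the series is reindexed by
`n = m + (k+1)`, `m ≥ 0`). -/
noncomputable def bCoef (lam t η₁ η₂ p q : ℝ) (k : ℕ) : ℝ :=
  η₂ ^ (k + 1) / (k.factorial : ℝ) *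
    ∑' m : ℕ, poisCoef lam t (m + (k + 1)) * Qcoef η₁ η₂ p q (m + (k + 1)) (k + 1)

/-- `G₁(t,u) = Σ_{k=0}^∞ a_k u^k`. -/
noncomputable def G1 (lam t η₁ η₂ p q : ℝ) (u : ℝ) : ℝ :=
  ∑' k : ℕ, aCoef lam t η₁ η₂ p q k * u ^ k

/-- `G₂(t,−u) = Σ_{k=0}^∞ b_k u^k`; `G2m lam t η₁ η₂ p q u` stands for `G₂(t,−u)`. -/
noncomputable def G2m (lam t η₁ η₂ p q : ℝ) (u : ℝ) : ℝ :=
  ∑' k : ℕ, bCoef lam t η₁ η₂ p q k * u ^ k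

/-- `H₁(t,x) = G₁(t, log x)` for `x > 1`. -/
noncomputable def H1fun (lam t η₁ η₂ p q : ℝ) (x : ℝ) : ℝ :=
  G1 lam t η₁ η₂ p q (Real.log x)

/-- `H₂(t,x) = G₂(t, log x) = G2m(t, log(1/x))` for `0 < x < 1`. -/
noncomputable def H2fun (lam t η₁ η₂ p q : ℝ) (x : ℝ) : ℝ :=
  G2m lam t η₁ η₂ p q (Real.log x⁻¹)

/-- The density of the absolutely continuous part of the law of the exponential compound
Poisson factor: `H(t,x) = H₁(t,x) x^{−η₁−1}` for `x > 1` and `H(t,x) = H₂(t,x) x^{η₂−1}`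
for `0 < x < 1`. -/
noncomputable def Hfun (lam t η₁ η₂ p q : ℝ) (x : ℝ) : ℝ :=
  if 1 < x then H1fun lam t η₁ η₂ p q x * x ^ (-η₁ - 1)
  else H2fun lam t η₁ η₂ p q x * x ^ (η₂ - 1)

/-- The Mellin convolution of two measurable functions on `(0,∞)`:
`f ⋆_M g (x) = ∫_0^∞ f(x/t) g(t) dt/t`. -/
noncomputable def mellinConv (f g : ℝ → ℝ) (x : ℝ) : ℝ :=
  ∫ t in Set.Ioi (0:ℝ), f (x / t) * g t / t



/-! ### Auxiliary development for Statement 7 -/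

section SVaux

open Real

/-- The comparison coefficients `v_k = β^(k+1)/(k! (k+1)!)`. -/
noncomputable def svVk (β : ℝ) (k : ℕ) : ℝ :=
  β ^ (k + 1) / ((k.factorial : ℝ) * ((k + 1).factorial : ℝ))

lemma svVk_pos {β : ℝ} (hβ : 0 < β) (k : ℕ) : 0 < svVk β k := by
  unfold svVk
  have h1 : (0:ℝ) < (k.factorial : ℝ) := by exact_mod_cast k.factorial_pos
  have h2 : (0:ℝ) < ((k+1).factorial : ℝ) := by exact_mod_cast (k+1).factorial_pos
  positivity

lemma svVk_nonneg {β : ℝ} (hβ : 0 < β) (k : ℕ) : 0 ≤ svVk β k := (svVk_pos hβ k).le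

lemma sv_c2_nonneg {β : ℝ} (hβ : 0 < β) {c₂ : ℝ} {d : ℕ → ℝ}
    (hd0 : ∀ k, 0 ≤ d k) (hup : ∀ k, d k ≤ c₂ * svVk β k) : 0 ≤ c₂ := by
  have h0 := (hd0 0).trans (hup 0)
  have h1 := svVk_pos hβ 0
  nlinarith

lemma sv_summable {β : ℝ} (hβ : 0 < β) {c₂ : ℝ} {d : ℕ → ℝ}
    (hd0 : ∀ k, 0 ≤ d k) (hup : ∀ k, d k ≤ c₂ * svVk β k) {u : ℝ} (hu : 0 ≤ u) :
    Summable (fun k => d k * u ^ k) := by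
  have hc₂ : 0 ≤ c₂ := sv_c2_nonneg hβ hd0 hup
  refine Summable.of_nonneg_of_le
    (fun k => mul_nonneg (hd0 k) (pow_nonneg hu k)) (fun k => ?_)
    ((Real.summable_pow_div_factorial (β * u)).mul_left (c₂ * β))
  have h1 : d k * u ^ k ≤ c₂ * svVk β k * u ^ k :=
    mul_le_mul_of_nonneg_right (hup k) (pow_nonneg hu k)
  refine h1.trans ?_
  have hf1 : (0:ℝ) < (k.factorial : ℝ) := by exact_mod_cast k.factorial_pos
  have hf2 : (1:ℝ) ≤ ((k+1).factorial : ℝ) := by exact_mod_cast (k+1).factorial_pos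
  have hkey : svVk β k ≤ β ^ (k+1) / (k.factorial : ℝ) := by
    unfold svVk
    apply div_le_div_of_nonneg_left (by positivity) hf1
    nlinarith
  calc c₂ * svVk β k * u ^ k ≤ c₂ * (β ^ (k+1) / (k.factorial : ℝ)) * u ^ k := by
        exact mul_le_mul_of_nonneg_right
          (mul_le_mul_of_nonneg_left hkey hc₂) (pow_nonneg hu k)
    _ = (c₂ * β) * ((β * u) ^ k / (k.factorial : ℝ)) := by
        rw [mul_pow, pow_succ]; ring

lemma sv_coeff_key {β : ℝ} (hβ : 0 < β) (k : ℕ) :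
    ((k:ℝ) + 1) ^ 2 * svVk β (k + 1) ≤ β * svVk β k := by
  unfold svVk
  have hf : (0:ℝ) < (k.factorial : ℝ) := by exact_mod_cast k.factorial_pos
  have e1 : (((k+1).factorial : ℕ) : ℝ) = ((k:ℝ) + 1) * (k.factorial : ℝ) := by
    push_cast [Nat.factorial_succ]; ring
  have e2 : (((k+2).factorial : ℕ) : ℝ) = ((k:ℝ) + 2) * (((k:ℝ) + 1) * (k.factorial : ℝ)) := by
    rw [Nat.factorial_succ]; push_cast [Nat.factorial_succ]; ring
  have hk1 : (0:ℝ) < (k:ℝ) + 1 := by positivity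
  have hk2 : (0:ℝ) < (k:ℝ) + 2 := by positivity
  have hβp : (0:ℝ) < β ^ (k+1) := pow_pos hβ _
  rw [show k + 1 + 1 = k + 2 from rfl, e1, e2, ← mul_div_assoc, ← mul_div_assoc,
    div_le_div_iff₀ (by positivity) (by positivity)]
  rw [show β ^ (k + 2) = β * β ^ (k+1) from by rw [pow_succ]; ring]
  nlinarith [mul_pos hf hk1, mul_pos (mul_pos hβ hβp) (mul_pos hf hk1)]

lemma sv_key {β w : ℝ} (hβ : 0 < β) (hw : 0 < w) (k : ℕ) :
    ((k:ℝ) + 1) * svVk β (k + 1) * w ^ k ≤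
      Real.sqrt β / Real.sqrt w *
        ((svVk β k * w ^ k + svVk β (k + 1) * w ^ (k + 1)) / 2) := by
  have hA : 0 < svVk β k * w ^ k := mul_pos (svVk_pos hβ k) (pow_pos hw k)
  have hB : 0 < svVk β (k+1) * w ^ (k+1) := mul_pos (svVk_pos hβ (k+1)) (pow_pos hw (k+1))
  have hC : 0 ≤ ((k:ℝ) + 1) * svVk β (k + 1) * w ^ k :=
    mul_nonneg (mul_nonneg (by positivity) (svVk_nonneg hβ (k+1))) (pow_nonneg hw.le k)
  have hsw : 0 < Real.sqrt w := Real.sqrt_pos.2 hw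
  have hsb : 0 < Real.sqrt β := Real.sqrt_pos.2 hβ
  rw [div_mul_eq_mul_div, le_div_iff₀ hsw]
  -- goal : C * √w ≤ √β * ((A + B)/2)
  have hkey : (((k:ℝ) + 1) * svVk β (k + 1) * w ^ k) ^ 2 * w ≤
      β * ((svVk β k * w ^ k) * (svVk β (k+1) * w ^ (k+1))) := by
    have hfac : (0:ℝ) ≤ svVk β (k+1) * w ^ (2*k+1) :=
      mul_nonneg (svVk_nonneg hβ (k+1)) (pow_nonneg hw.le _)
    have h1 := mul_le_mul_of_nonneg_right (sv_coeff_key hβ k) hfac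
    calc (((k:ℝ) + 1) * svVk β (k + 1) * w ^ k) ^ 2 * w
        = (((k:ℝ) + 1) ^ 2 * svVk β (k+1)) * (svVk β (k+1) * w ^ (2*k+1)) := by
          rw [show 2*k+1 = k + (k+1) from by ring, pow_add]; ring
      _ ≤ (β * svVk β k) * (svVk β (k+1) * w ^ (2*k+1)) := h1
      _ = β * ((svVk β k * w ^ k) * (svVk β (k+1) * w ^ (k+1))) := by
          rw [show 2*k+1 = k + (k+1) from by ring, pow_add]; ring
  have hl1 : (((k:ℝ) + 1) * svVk β (k + 1) * w ^ k * Real.sqrt w) ^ 2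
      = (((k:ℝ) + 1) * svVk β (k + 1) * w ^ k) ^ 2 * w := by
    rw [mul_pow, Real.sq_sqrt hw.le]
  have hl2 : (Real.sqrt β * ((svVk β k * w ^ k + svVk β (k+1) * w ^ (k+1)) / 2)) ^ 2
      = β * ((svVk β k * w ^ k + svVk β (k+1) * w ^ (k+1)) / 2) ^ 2 := by
    rw [mul_pow, Real.sq_sqrt hβ.le]
  have hsq : (((k:ℝ) + 1) * svVk β (k + 1) * w ^ k * Real.sqrt w) ^ 2 ≤
      (Real.sqrt β * ((svVk β k * w ^ k + svVk β (k+1) * w ^ (k+1)) / 2)) ^ 2 := by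
    rw [hl1, hl2]
    nlinarith [sq_nonneg (svVk β k * w ^ k - svVk β (k+1) * w ^ (k+1))]
  nlinarith [hsq, mul_nonneg hC hsw.le,
    mul_nonneg hsb.le (le_of_lt (by positivity : (0:ℝ) <
      (svVk β k * w ^ k + svVk β (k+1) * w ^ (k+1)) / 2))]

lemma sv_pow_diff {u w : ℝ} (h0 : 0 ≤ u) (h : u ≤ w) (k : ℕ) :
    w ^ (k+1) - u ^ (k+1) ≤ ((k:ℝ) + 1) * (w - u) * w ^ k := by
  induction k with
  | zero => simp
  | succ n ih =>
    have hw0 : 0 ≤ w := h0.trans h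
    have hpow : u ^ (n+1) ≤ w ^ (n+1) := pow_le_pow_left₀ h0 h (n+1)
    have hb1 : w * (w ^ (n+1) - u ^ (n+1)) ≤ w * (((n:ℝ)+1) * (w - u) * w ^ n) :=
      mul_le_mul_of_nonneg_left ih hw0
    have hb2 : u ^ (n+1) * (w - u) ≤ w ^ (n+1) * (w - u) :=
      mul_le_mul_of_nonneg_right hpow (sub_nonneg.2 h)
    have hcast : ((n+1 : ℕ) : ℝ) = (n:ℝ) + 1 := by push_cast; ring
    rw [hcast]
    calc w ^ (n+1+1) - u ^ (n+1+1)
        = w * (w ^ (n+1) - u ^ (n+1)) + u ^ (n+1) * (w - u) := by ring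
      _ ≤ w * (((n:ℝ)+1) * (w - u) * w ^ n) + w ^ (n+1) * (w - u) := add_le_add hb1 hb2
      _ = ((n:ℝ) + 1 + 1) * (w - u) * w ^ (n+1) := by ring

lemma sv_Sdiff {β : ℝ} (hβ : 0 < β) {c₂ : ℝ} {d : ℕ → ℝ}
    (hd0 : ∀ k, 0 ≤ d k) (hup : ∀ k, d k ≤ c₂ * svVk β k)
    {u c : ℝ} (hu : 0 < u) (hc : 0 < c) :
    (∑' k : ℕ, d k * (u + c) ^ k) - (∑' k : ℕ, d k * u ^ k) ≤
      c₂ * (c * Real.sqrt β / Real.sqrt u) * (∑' k : ℕ, svVk β k * (u + c) ^ k) := by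
  have hc₂ : 0 ≤ c₂ := sv_c2_nonneg hβ hd0 hup
  set w := u + c with hw_def
  have hw : 0 < w := by positivity
  have huw : u ≤ w := by rw [hw_def]; linarith
  have hv0 : ∀ k, 0 ≤ svVk β k := svVk_nonneg hβ
  have hv_up : ∀ k, svVk β k ≤ 1 * svVk β k := fun k => (one_mul (svVk β k)).symm.le
  have hSw : Summable fun k => d k * w ^ k := sv_summable hβ hd0 hup hw.le
  have hSu : Summable fun k => d k * u ^ k := sv_summable hβ hd0 hup hu.le
  have hFw : Summable fun k => svVk β k * w ^ k := sv_summable hβ hv0 hv_up hw.le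
  have hFw1 : Summable fun k => svVk β (k+1) * w ^ (k+1) :=
    (summable_nat_add_iff 1).2 hFw
  have hsub : Summable fun k => d k * w ^ k - d k * u ^ k := hSw.sub hSu
  have hsw : 0 < Real.sqrt w := Real.sqrt_pos.2 hw
  have hsu : 0 < Real.sqrt u := Real.sqrt_pos.2 hu
  have hsuw : Real.sqrt u ≤ Real.sqrt w := Real.sqrt_le_sqrt huw
  rw [← Summable.tsum_sub hSw hSu, Summable.tsum_eq_zero_add hsub]
  have hzero : d 0 * w ^ 0 - d 0 * u ^ 0 = 0 := by simp
  rw [hzero, zero_add]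
  have hterm : ∀ k : ℕ, d (k+1) * w ^ (k+1) - d (k+1) * u ^ (k+1) ≤
      c₂ * (c * Real.sqrt β / Real.sqrt u) *
        ((svVk β k * w ^ k + svVk β (k+1) * w ^ (k+1)) / 2) := by
    intro k
    have hABnn : (0:ℝ) ≤ (svVk β k * w ^ k + svVk β (k+1) * w ^ (k+1)) / 2 := by
      have e1 : 0 ≤ svVk β k * w ^ k := mul_nonneg (hv0 k) (pow_nonneg hw.le k)
      have e2 : 0 ≤ svVk β (k+1) * w ^ (k+1) := mul_nonneg (hv0 (k+1)) (pow_nonneg hw.le _)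
      linarith
    have h2 : w ^ (k+1) - u ^ (k+1) ≤ ((k:ℝ)+1) * c * w ^ k := by
      have h := sv_pow_diff hu.le huw k
      have hwu : w - u = c := by rw [hw_def]; ring
      rw [hwu] at h
      linarith
    have hpownn : (0:ℝ) ≤ w ^ (k+1) - u ^ (k+1) :=
      sub_nonneg.2 (pow_le_pow_left₀ hu.le huw (k+1))
    have h3 : d (k+1) * (w ^ (k+1) - u ^ (k+1)) ≤
        (c₂ * svVk β (k+1)) * (((k:ℝ)+1) * c * w ^ k) :=
      mul_le_mul (hup (k+1)) h2 hpownn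
        (mul_nonneg hc₂ (hv0 (k+1)))
    have h5 := mul_le_mul_of_nonneg_left (sv_key hβ hw k)
      (mul_nonneg hc₂ hc.le : (0:ℝ) ≤ c₂ * c)
    have h6 : Real.sqrt β / Real.sqrt w ≤ Real.sqrt β / Real.sqrt u :=
      div_le_div_of_nonneg_left (Real.sqrt_nonneg β) hsu hsuw
    have h7 : (c₂ * c) * (Real.sqrt β / Real.sqrt w *
        ((svVk β k * w ^ k + svVk β (k+1) * w ^ (k+1)) / 2)) ≤
        (c₂ * c) * (Real.sqrt β / Real.sqrt u *
        ((svVk β k * w ^ k + svVk β (k+1) * w ^ (k+1)) / 2)) :=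
      mul_le_mul_of_nonneg_left
        (mul_le_mul_of_nonneg_right h6 hABnn)
        (mul_nonneg hc₂ hc.le)
    calc d (k+1) * w ^ (k+1) - d (k+1) * u ^ (k+1)
        = d (k+1) * (w ^ (k+1) - u ^ (k+1)) := by ring
      _ ≤ (c₂ * svVk β (k+1)) * (((k:ℝ)+1) * c * w ^ k) := h3
      _ = (c₂ * c) * (((k:ℝ)+1) * svVk β (k+1) * w ^ k) := by ring
      _ ≤ (c₂ * c) * (Real.sqrt β / Real.sqrt w *
            ((svVk β k * w ^ k + svVk β (k+1) * w ^ (k+1)) / 2)) := h5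
      _ ≤ (c₂ * c) * (Real.sqrt β / Real.sqrt u *
            ((svVk β k * w ^ k + svVk β (k+1) * w ^ (k+1)) / 2)) := h7
      _ = c₂ * (c * Real.sqrt β / Real.sqrt u) *
            ((svVk β k * w ^ k + svVk β (k+1) * w ^ (k+1)) / 2) := by ring
  have hbnd_sum : Summable fun k => c₂ * (c * Real.sqrt β / Real.sqrt u) *
      ((svVk β k * w ^ k + svVk β (k+1) * w ^ (k+1)) / 2) :=
    ((hFw.add hFw1).div_const 2).mul_left _
  have hstep := Summable.tsum_le_tsum hterm ((summable_nat_add_iff 1).2 hsub) hbnd_sum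
  refine hstep.trans ?_
  rw [tsum_mul_left]
  apply mul_le_mul_of_nonneg_left _
    (mul_nonneg hc₂ (by positivity : (0:ℝ) ≤ c * Real.sqrt β / Real.sqrt u))
  have hsplit : (∑' k : ℕ, (svVk β k * w ^ k + svVk β (k+1) * w ^ (k+1)) / 2)
      = ((∑' k : ℕ, svVk β k * w ^ k) + (∑' k : ℕ, svVk β (k+1) * w ^ (k+1))) / 2 := by
    rw [tsum_div_const, Summable.tsum_add hFw hFw1]
  rw [hsplit]
  have hshift : (∑' k : ℕ, svVk β (k+1) * w ^ (k+1)) ≤ ∑' k : ℕ, svVk β k * w ^ k := by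
    have h := Summable.tsum_eq_zero_add hFw
    have h0 : 0 ≤ svVk β 0 * w ^ 0 := mul_nonneg (hv0 0) (by positivity)
    linarith [h.ge, h.le]
  linarith [hshift]

lemma sv_ratio {β c₁ c₂ : ℝ} (hβ : 0 < β) (hc₁ : 0 < c₁) {d : ℕ → ℝ}
    (hlow : ∀ k, c₁ * svVk β k ≤ d k) (hup : ∀ k, d k ≤ c₂ * svVk β k)
    {c : ℝ} (hc : 0 < c) :
    (fun u : ℝ => (∑' k : ℕ, d k * (u + c) ^ k) / (∑' k : ℕ, d k * u ^ k) - 1)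
      =O[Filter.atTop] fun u : ℝ => u ^ (-(1:ℝ)/2) := by
  have hd0 : ∀ k, 0 ≤ d k := fun k =>
    le_trans (mul_nonneg hc₁.le (svVk_nonneg hβ k)) (hlow k)
  have hc₂ : 0 ≤ c₂ := sv_c2_nonneg hβ hd0 hup
  have hv0 : ∀ k, 0 ≤ svVk β k := svVk_nonneg hβ
  have hv_up : ∀ k, svVk β k ≤ 1 * svVk β k := fun k => (one_mul (svVk β k)).symm.le
  rw [Asymptotics.isBigO_iff]
  refine ⟨2 * c * c₂ * Real.sqrt β / c₁, ?_⟩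
  filter_upwards [Filter.eventually_ge_atTop (max 1 (4 * c ^ 2 * β))] with u hu
  have hu1 : (1:ℝ) ≤ u := le_trans (le_max_left _ _) hu
  have hu0 : 0 < u := lt_of_lt_of_le one_pos hu1
  have hu4 : 4 * c ^ 2 * β ≤ u := le_trans (le_max_right _ _) hu
  have hsu : 0 < Real.sqrt u := Real.sqrt_pos.2 hu0
  set w := u + c with hw_def
  have hw : 0 < w := by positivity
  have huw : u ≤ w := by rw [hw_def]; linarith
  -- summability
  have hSw : Summable fun k => d k * w ^ k := sv_summable hβ hd0 hup hw.le
  have hSu : Summable fun k => d k * u ^ k := sv_summable hβ hd0 hup hu0.le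
  have hFw : Summable fun k => svVk β k * w ^ k := sv_summable hβ hv0 hv_up hw.le
  have hFu : Summable fun k => svVk β k * u ^ k := sv_summable hβ hv0 hv_up hu0.le
  -- positivity of the sums
  have hFu_pos : 0 < ∑' k : ℕ, svVk β k * u ^ k := by
    refine Summable.tsum_pos hFu (fun k => mul_nonneg (hv0 k) (pow_nonneg hu0.le k)) 0 ?_
    exact mul_pos (svVk_pos hβ 0) (by positivity)
  have hFw_pos : 0 < ∑' k : ℕ, svVk β k * w ^ k := by
    refine Summable.tsum_pos hFw (fun k => mul_nonneg (hv0 k) (pow_nonneg hw.le k)) 0 ?_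
    exact mul_pos (svVk_pos hβ 0) (by positivity)
  -- `f u ≥ c₁ F u`
  have hfu_low : c₁ * (∑' k : ℕ, svVk β k * u ^ k) ≤ ∑' k : ℕ, d k * u ^ k := by
    rw [← tsum_mul_left]
    refine Summable.tsum_le_tsum (fun k => ?_) (hFu.mul_left c₁) hSu
    calc c₁ * (svVk β k * u ^ k) = (c₁ * svVk β k) * u ^ k := by ring
      _ ≤ d k * u ^ k := mul_le_mul_of_nonneg_right (hlow k) (pow_nonneg hu0.le k)
  have hfu_pos : 0 < ∑' k : ℕ, d k * u ^ k :=
    lt_of_lt_of_le (mul_pos hc₁ hFu_pos) hfu_low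
  -- monotonicity `f u ≤ f w`
  have hmono : (∑' k : ℕ, d k * u ^ k) ≤ ∑' k : ℕ, d k * w ^ k := by
    refine Summable.tsum_le_tsum (fun k => ?_) hSu hSw
    exact mul_le_mul_of_nonneg_left (pow_le_pow_left₀ hu0.le huw k) (hd0 k)
  -- half bound
  have hhalf : c * Real.sqrt β / Real.sqrt u ≤ 1 / 2 := by
    have h2 : 2 * c * Real.sqrt β ≤ Real.sqrt u := by
      have h3 : Real.sqrt (4 * c ^ 2 * β) ≤ Real.sqrt u := Real.sqrt_le_sqrt hu4
      calc 2 * c * Real.sqrt β = Real.sqrt ((2*c)^2) * Real.sqrt β := by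
            rw [Real.sqrt_sq (by positivity)]
        _ = Real.sqrt (4 * c ^ 2 * β) := by
            rw [← Real.sqrt_mul (by positivity)]; ring_nf
        _ ≤ Real.sqrt u := h3
    rw [div_le_div_iff₀ hsu two_pos]
    linarith
  -- F w ≤ 2 F u
  have hFdiff : (∑' k : ℕ, svVk β k * w ^ k) - (∑' k : ℕ, svVk β k * u ^ k) ≤
      (c * Real.sqrt β / Real.sqrt u) * (∑' k : ℕ, svVk β k * w ^ k) := by
    have h := sv_Sdiff hβ hv0 hv_up hu0 hc
    rw [one_mul] at h
    exact h
  have hFw2 : (∑' k : ℕ, svVk β k * w ^ k) ≤ 2 * ∑' k : ℕ, svVk β k * u ^ k := by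
    have hmm : (c * Real.sqrt β / Real.sqrt u) * (∑' k : ℕ, svVk β k * w ^ k) ≤
        (1/2) * (∑' k : ℕ, svVk β k * w ^ k) :=
      mul_le_mul_of_nonneg_right hhalf hFw_pos.le
    linarith
  -- numerator bound
  have hfd : (∑' k : ℕ, d k * w ^ k) - (∑' k : ℕ, d k * u ^ k) ≤
      c₂ * (c * Real.sqrt β / Real.sqrt u) * (∑' k : ℕ, svVk β k * w ^ k) :=
    sv_Sdiff hβ hd0 hup hu0 hc
  have hnum : (∑' k : ℕ, d k * w ^ k) - (∑' k : ℕ, d k * u ^ k) ≤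
      (2 * c * c₂ * Real.sqrt β / c₁) * (Real.sqrt u)⁻¹ * (∑' k : ℕ, d k * u ^ k) := by
    have hb1 : c₂ * (c * Real.sqrt β / Real.sqrt u) * (∑' k : ℕ, svVk β k * w ^ k) ≤
        c₂ * (c * Real.sqrt β / Real.sqrt u) * (2 * ∑' k : ℕ, svVk β k * u ^ k) := by
      refine mul_le_mul_of_nonneg_left hFw2 ?_
      have : 0 ≤ c * Real.sqrt β / Real.sqrt u := by positivity
      exact mul_nonneg hc₂ this
    have hb2 : c₂ * (c * Real.sqrt β / Real.sqrt u) * (2 * ∑' k : ℕ, svVk β k * u ^ k)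
        ≤ c₂ * (c * Real.sqrt β / Real.sqrt u) * (2 * ((∑' k : ℕ, d k * u ^ k) / c₁)) := by
      refine mul_le_mul_of_nonneg_left ?_ ?_
      · have hstep : (∑' k : ℕ, svVk β k * u ^ k) ≤ (∑' k : ℕ, d k * u ^ k) / c₁ := by
          rw [le_div_iff₀ hc₁]
          linarith [hfu_low]
        linarith
      · have : 0 ≤ c * Real.sqrt β / Real.sqrt u := by positivity
        exact mul_nonneg hc₂ this
    have heq : c₂ * (c * Real.sqrt β / Real.sqrt u) * (2 * ((∑' k : ℕ, d k * u ^ k) / c₁))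
        = (2 * c * c₂ * Real.sqrt β / c₁) * (Real.sqrt u)⁻¹ * (∑' k : ℕ, d k * u ^ k) := by
      field_simp
    exact le_trans hfd (le_trans hb1 (le_trans hb2 heq.le))
  -- conclude
  have hrpow : u ^ (-(1:ℝ)/2) = (Real.sqrt u)⁻¹ := by
    rw [neg_div, Real.rpow_neg hu0.le, Real.sqrt_eq_rpow]
  have hratio_nn : 0 ≤ (∑' k : ℕ, d k * w ^ k) / (∑' k : ℕ, d k * u ^ k) - 1 := by
    rw [sub_nonneg, le_div_iff₀ hfu_pos, one_mul]
    exact hmono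
  rw [Real.norm_of_nonneg hratio_nn, Real.norm_of_nonneg (Real.rpow_nonneg hu0.le _)]
  rw [hrpow, div_sub_one hfu_pos.ne', div_le_iff₀ hfu_pos]
  calc (∑' k : ℕ, d k * w ^ k) - (∑' k : ℕ, d k * u ^ k)
      ≤ (2 * c * c₂ * Real.sqrt β / c₁) * (Real.sqrt u)⁻¹ * (∑' k : ℕ, d k * u ^ k) := hnum
    _ = 2 * c * c₂ * Real.sqrt β / c₁ * (Real.sqrt u)⁻¹ * (∑' k : ℕ, d k * u ^ k) := by ring

end SVaux


section SVcoef

open Real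

lemma sv_choose_le_two_pow (n k : ℕ) : n.choose k ≤ 2 ^ n := by
  rcases le_or_gt k n with h | h
  · calc n.choose k ≤ ∑ i ∈ Finset.range (n+1), n.choose i :=
        Finset.single_le_sum (f := fun i => n.choose i) (fun i _ => Nat.zero_le _)
          (Finset.mem_range.2 (by omega))
    _ = 2 ^ n := Nat.sum_range_choose n
  · rw [Nat.choose_eq_zero_of_lt h]; exact Nat.zero_le _

lemma sv_factorial_mul_factorial_le (a b : ℕ) :
    a.factorial * b.factorial ≤ (a + b).factorial := by
  have h := Nat.add_choose_mul_factorial_mul_factorial a b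
  have hpos : 1 ≤ (a + b).choose b := Nat.choose_pos (Nat.le_add_left b a)
  calc a.factorial * b.factorial = 1 * (a.factorial * b.factorial) := by ring
    _ ≤ (a + b).choose b * (a.factorial * b.factorial) :=
        Nat.mul_le_mul_right _ hpos
    _ = (a + b).factorial := by rw [← h]; ring

lemma Pcoef_nonneg {η₁ η₂ p q : ℝ} (hη₁ : 0 ≤ η₁) (hη₂ : 0 ≤ η₂) (hp : 0 ≤ p)
    (hq : 0 ≤ q) (n k : ℕ) : 0 ≤ Pcoef η₁ η₂ p q n k := by
  unfold Pcoef
  split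
  · positivity
  · refine Finset.sum_nonneg fun i _ => ?_
    have h1 : (0:ℝ) ≤ η₁ / (η₁ + η₂) := by positivity
    have h2 : (0:ℝ) ≤ η₂ / (η₁ + η₂) := by positivity
    positivity

lemma Pcoef_upper {η₁ η₂ p q : ℝ} (hη₁ : 0 < η₁) (hη₂ : 0 < η₂)
    (hp : 0 < p) (hp1 : p ≤ 1) (hq : 0 ≤ q) (hq1 : q ≤ 1) (k m : ℕ) :
    Pcoef η₁ η₂ p q (k+1+m) (k+1) ≤
      4 ^ m * p ^ (k+1) * ((k+1+m).factorial : ℝ) /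
        (((k+1).factorial : ℝ) * (m.factorial : ℝ)) := by
  have hr0 : (0:ℝ) ≤ η₁ / (η₁ + η₂) := by positivity
  have hr1 : η₁ / (η₁ + η₂) ≤ 1 := by
    rw [div_le_one (by positivity)]; linarith
  have hs0 : (0:ℝ) ≤ η₂ / (η₁ + η₂) := by positivity
  have hs1 : η₂ / (η₁ + η₂) ≤ 1 := by
    rw [div_le_one (by positivity)]; linarith
  have hfk : (0:ℝ) < ((k+1).factorial : ℝ) := by exact_mod_cast (k+1).factorial_pos
  have hfm : (0:ℝ) < (m.factorial : ℝ) := by exact_mod_cast m.factorial_pos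
  rcases Nat.eq_zero_or_pos m with hm | hm
  · subst hm
    have hdiag : Pcoef η₁ η₂ p q (k+1+0) (k+1) = p ^ (k+1) := by
      rw [show k+1+0 = k+1 from rfl, Pcoef, if_pos rfl]
    rw [hdiag]
    have : (4:ℝ)^0 * p ^ (k+1) * ((k+1+0).factorial : ℝ) /
        (((k+1).factorial : ℝ) * ((0:ℕ).factorial : ℝ)) = p ^ (k+1) := by
      field_simp; simp
    rw [this]
  · have hne : ¬ (k+1 = k+1+m) := by omega
    rw [Pcoef, if_neg hne]
    set n := k+1+m with hn_def
    -- termwise bound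
    have hterm : ∀ i ∈ Finset.Ico (k+1) n,
        ((n - (k+1) - 1).choose (i - (k+1)) : ℝ) * (n.choose i : ℝ) *
          (η₁ / (η₁ + η₂)) ^ (i - (k+1)) * (η₂ / (η₁ + η₂)) ^ (n - i) * p ^ i * q ^ (n - i)
        ≤ (2:ℝ) ^ m * ((n.factorial : ℝ) / (((k+1).factorial : ℝ) * (m.factorial : ℝ)))
            * p ^ (k+1) * ((m.choose (i - (k+1)) : ℝ)) := by
      intro i hi
      rw [Finset.mem_Ico] at hi
      obtain ⟨hi1, hi2⟩ := hi
      set j := i - (k+1) with hj_def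
      have hij : i = k+1+j := by omega
      have hjm : j ≤ m - 1 := by omega
      have hnk : n - (k+1) - 1 = m - 1 := by omega
      have hni : n - i = m - j := by omega
      -- choose bounds
      have hch1 : ((n - (k+1) - 1).choose j : ℝ) ≤ (2:ℝ) ^ m := by
        rw [hnk]
        have h := sv_choose_le_two_pow (m-1) j
        have h2 : (2:ℕ) ^ (m-1) ≤ 2 ^ m := Nat.pow_le_pow_right (by norm_num) (by omega)
        exact_mod_cast le_trans h h2
      have hchN : (n.choose i : ℝ) * (((k+1).factorial : ℝ) * (m.factorial : ℝ)) ≤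
          (n.factorial : ℝ) * (m.choose j : ℝ) := by
        have hjm' : j ≤ m := by omega
        have hin : i ≤ n := by omega
        have h1 : (k+1).factorial * j.factorial ≤ i.factorial := by
          rw [hij]; exact sv_factorial_mul_factorial_le (k+1) j
        have h2 : m.choose j * (j.factorial * (m-j).factorial) = m.factorial := by
          rw [← mul_assoc]; exact Nat.choose_mul_factorial_mul_factorial hjm'
        have h3 : n.choose i * (i.factorial * (n-i).factorial) = n.factorial := by
          rw [← mul_assoc]; exact Nat.choose_mul_factorial_mul_factorial hin
        have key : n.choose i * ((k+1).factorial * m.factorial) ≤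
            n.factorial * m.choose j := by
          calc n.choose i * ((k+1).factorial * m.factorial)
              = n.choose i * ((k+1).factorial * (m.choose j * (j.factorial * (m-j).factorial))) := by
                rw [h2]
            _ = (n.choose i * ((k+1).factorial * j.factorial) * (m-j).factorial) * m.choose j := by
                ring
            _ ≤ (n.choose i * i.factorial * (m-j).factorial) * m.choose j := by
                apply Nat.mul_le_mul_right
                apply Nat.mul_le_mul_right
                exact Nat.mul_le_mul_left _ h1
            _ = (n.choose i * (i.factorial * (n-i).factorial)) * m.choose j := by
                rw [← hni]; ring
            _ = n.factorial * m.choose j := by rw [h3]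
        exact_mod_cast key
      have hchN' : (n.choose i : ℝ) ≤
          (n.factorial : ℝ) * (m.choose j : ℝ) / (((k+1).factorial : ℝ) * (m.factorial : ℝ)) := by
        rw [le_div_iff₀ (by positivity)]
        exact hchN
      have hpi : p ^ i ≤ p ^ (k+1) := pow_le_pow_of_le_one hp.le hp1 hi1
      have hr : (η₁ / (η₁ + η₂)) ^ (i - (k+1)) ≤ 1 := pow_le_one₀ hr0 hr1
      have hs : (η₂ / (η₁ + η₂)) ^ (n - i) ≤ 1 := pow_le_one₀ hs0 hs1
      have hqp : q ^ (n - i) ≤ 1 := pow_le_one₀ hq hq1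
      calc ((n - (k+1) - 1).choose (i - (k+1)) : ℝ) * (n.choose i : ℝ) *
            (η₁ / (η₁ + η₂)) ^ (i - (k+1)) * (η₂ / (η₁ + η₂)) ^ (n - i) * p ^ i * q ^ (n - i)
          ≤ (2:ℝ)^m * (n.choose i : ℝ) * 1 * 1 * p ^ (k+1) * 1 := by
            gcongr <;> first
              | exact hch1
              | exact hr
              | exact hs
              | exact hpi
              | exact hqp
              | positivity
        _ = (2:ℝ)^m * (n.choose i : ℝ) * p ^ (k+1) := by ring
        _ ≤ (2:ℝ)^m * ((n.factorial : ℝ) * (m.choose j : ℝ) /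
              (((k+1).factorial : ℝ) * (m.factorial : ℝ))) * p ^ (k+1) := by
            gcongr
        _ = (2:ℝ) ^ m * ((n.factorial : ℝ) / (((k+1).factorial : ℝ) * (m.factorial : ℝ)))
              * p ^ (k+1) * ((m.choose j : ℝ)) := by ring
    refine le_trans (Finset.sum_le_sum hterm) ?_
    rw [← Finset.mul_sum]
    have hsum : ∑ i ∈ Finset.Ico (k+1) n, ((m.choose (i - (k+1))) : ℝ) ≤ (2:ℝ) ^ m := by
      have h1 : ∑ i ∈ Finset.Ico (k+1) n, ((m.choose (i - (k+1))) : ℝ)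
          = ∑ j ∈ Finset.range m, ((m.choose j) : ℝ) := by
        rw [Finset.sum_Ico_eq_sum_range]
        apply Finset.sum_congr
        · congr 1; omega
        · intro j _
          have hj' : k + 1 + j - (k + 1) = j := by omega
          rw [hj']
      rw [h1]
      have h2 : ∑ j ∈ Finset.range m, ((m.choose j) : ℝ)
          ≤ ∑ j ∈ Finset.range (m+1), ((m.choose j) : ℝ) := by
        apply Finset.sum_le_sum_of_subset_of_nonneg
        · exact Finset.range_subset_range.2 (by omega)
        · intro j _ _; positivity
      refine h2.trans ?_
      have h3 : ∑ j ∈ Finset.range (m+1), ((m.choose j) : ℝ) = ((2:ℕ) ^ m : ℝ) := by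
        rw [← Nat.cast_sum]
        exact_mod_cast congrArg (Nat.cast : ℕ → ℝ) (Nat.sum_range_choose m)
      rw [h3]; norm_num
    calc (2:ℝ) ^ m * ((n.factorial : ℝ) / (((k+1).factorial : ℝ) * (m.factorial : ℝ)))
          * p ^ (k+1) * (∑ i ∈ Finset.Ico (k+1) n, ((m.choose (i - (k+1))) : ℝ))
        ≤ (2:ℝ) ^ m * ((n.factorial : ℝ) / (((k+1).factorial : ℝ) * (m.factorial : ℝ)))
          * p ^ (k+1) * (2:ℝ) ^ m := by
          have hnf : (0:ℝ) < (n.factorial : ℝ) := by exact_mod_cast n.factorial_pos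
          exact mul_le_mul_of_nonneg_left hsum (by positivity)
      _ = 4 ^ m * p ^ (k+1) * ((n.factorial) : ℝ) /
            (((k+1).factorial : ℝ) * (m.factorial : ℝ)) := by
          rw [show (4:ℝ)^m = 2^m * 2^m from by rw [← mul_pow]; norm_num]
          ring

end SVcoef


section SVa

open Real

variable {lam t η₁ η₂ p q : ℝ}

lemma poisCoef_nonneg (hL : 0 < lam * t) (n : ℕ) : 0 ≤ poisCoef lam t n := by
  unfold poisCoef
  have h1 : (0:ℝ) < (n.factorial : ℝ) := by exact_mod_cast n.factorial_pos
  positivity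

lemma sv_inner_term_le (hη₁ : 0 < η₁) (hη₂ : 0 < η₂) (hp : 0 < p) (hp1 : p ≤ 1)
    (hq : 0 ≤ q) (hq1 : q ≤ 1) (hL : 0 < lam * t) (k m : ℕ) :
    poisCoef lam t (m+(k+1)) * Pcoef η₁ η₂ p q (m+(k+1)) (k+1) ≤
      (Real.exp (-(lam*t)) * (lam*t)^(k+1) * p^(k+1) / (((k+1).factorial : ℕ) : ℝ)) *
        ((4*(lam*t))^m / ((m.factorial : ℕ) : ℝ)) := by
  have hcomm : m + (k+1) = k+1+m := by omega
  rw [hcomm]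
  have hP := Pcoef_upper hη₁ hη₂ hp hp1 hq hq1 k m
  have hpois_nn : 0 ≤ poisCoef lam t (k+1+m) := poisCoef_nonneg hL _
  have h1 := mul_le_mul_of_nonneg_left hP hpois_nn
  refine h1.trans (le_of_eq ?_)
  unfold poisCoef
  have hf1 : (((k+1+m).factorial : ℕ) : ℝ) ≠ 0 := by
    exact_mod_cast (k+1+m).factorial_pos.ne'
  have hf2 : (((k+1).factorial : ℕ) : ℝ) ≠ 0 := by
    exact_mod_cast (k+1).factorial_pos.ne'
  have hf3 : ((m.factorial : ℕ) : ℝ) ≠ 0 := by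
    exact_mod_cast m.factorial_pos.ne'
  rw [show (lam*t)^(k+1+m) = (lam*t)^(k+1) * (lam*t)^m from by rw [pow_add],
    show (4*(lam*t))^m = 4^m * (lam*t)^m from by rw [mul_pow]]
  field_simp

lemma sv_inner_summable (hη₁ : 0 < η₁) (hη₂ : 0 < η₂) (hp : 0 < p) (hp1 : p ≤ 1)
    (hq : 0 ≤ q) (hq1 : q ≤ 1) (hL : 0 < lam * t) (k : ℕ) :
    Summable (fun m => poisCoef lam t (m+(k+1)) * Pcoef η₁ η₂ p q (m+(k+1)) (k+1)) := by
  refine Summable.of_nonneg_of_le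
    (fun m => mul_nonneg (poisCoef_nonneg hL _)
      (Pcoef_nonneg hη₁.le hη₂.le hp.le hq _ _))
    (sv_inner_term_le hη₁ hη₂ hp hp1 hq hq1 hL k)
    ((Real.summable_pow_div_factorial (4*(lam*t))).mul_left _)

lemma sv_aCoef_upper (hη₁ : 0 < η₁) (hη₂ : 0 < η₂) (hp : 0 < p) (hp1 : p ≤ 1)
    (hq : 0 ≤ q) (hq1 : q ≤ 1) (hL : 0 < lam * t) (k : ℕ) :
    aCoef lam t η₁ η₂ p q k ≤ Real.exp (3*(lam*t)) * svVk (η₁*(lam*t)*p) k := by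
  unfold aCoef
  have hT : (∑' m : ℕ, poisCoef lam t (m+(k+1)) * Pcoef η₁ η₂ p q (m+(k+1)) (k+1)) ≤
      (Real.exp (-(lam*t)) * (lam*t)^(k+1) * p^(k+1) / (((k+1).factorial : ℕ) : ℝ)) *
        Real.exp (4*(lam*t)) := by
    have h1 := Summable.tsum_le_tsum (sv_inner_term_le hη₁ hη₂ hp hp1 hq hq1 hL k)
      (sv_inner_summable hη₁ hη₂ hp hp1 hq hq1 hL k)
      ((Real.summable_pow_div_factorial (4*(lam*t))).mul_left _)
    rw [tsum_mul_left] at h1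
    have h2 : (∑' m : ℕ, (4*(lam*t))^m / ((m.factorial : ℕ) : ℝ)) = Real.exp (4*(lam*t)) := by
      rw [Real.exp_eq_exp_ℝ, NormedSpace.exp_eq_tsum_div]
    rw [h2] at h1
    exact h1
  have hmul := mul_le_mul_of_nonneg_left hT
    (by positivity : (0:ℝ) ≤ η₁ ^ (k+1) / ((k.factorial : ℕ) : ℝ))
  refine hmul.trans (le_of_eq ?_)
  have hexp : Real.exp (-(lam*t)) * Real.exp (4*(lam*t)) = Real.exp (3*(lam*t)) := by
    rw [← Real.exp_add]; ring_nf
  unfold svVk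
  rw [show (η₁*(lam*t)*p)^(k+1) = η₁^(k+1) * (lam*t)^(k+1) * p^(k+1) from by
    rw [mul_pow, mul_pow]]
  rw [← hexp]
  have hf2 : (((k+1).factorial : ℕ) : ℝ) ≠ 0 := by
    exact_mod_cast (k+1).factorial_pos.ne'
  have hf3 : ((k.factorial : ℕ) : ℝ) ≠ 0 := by
    exact_mod_cast k.factorial_pos.ne'
  field_simp

lemma sv_aCoef_lower (hη₁ : 0 < η₁) (hη₂ : 0 < η₂) (hp : 0 < p) (hp1 : p ≤ 1)
    (hq : 0 ≤ q) (hq1 : q ≤ 1) (hL : 0 < lam * t) (k : ℕ) :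
    Real.exp (-(lam*t)) * svVk (η₁*(lam*t)*p) k ≤ aCoef lam t η₁ η₂ p q k := by
  unfold aCoef
  have h0 : poisCoef lam t (0+(k+1)) * Pcoef η₁ η₂ p q (0+(k+1)) (k+1) ≤
      ∑' m : ℕ, poisCoef lam t (m+(k+1)) * Pcoef η₁ η₂ p q (m+(k+1)) (k+1) :=
    Summable.le_tsum (sv_inner_summable hη₁ hη₂ hp hp1 hq hq1 hL k) 0
      (fun j _ => mul_nonneg (poisCoef_nonneg hL _)
        (Pcoef_nonneg hη₁.le hη₂.le hp.le hq _ _))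
  have hval : poisCoef lam t (0+(k+1)) * Pcoef η₁ η₂ p q (0+(k+1)) (k+1)
      = Real.exp (-(lam*t)) * (lam*t)^(k+1) * p^(k+1) / (((k+1).factorial : ℕ) : ℝ) := by
    rw [show (0+(k+1)) = k+1 from by omega, Pcoef, if_pos rfl]
    unfold poisCoef
    ring
  rw [hval] at h0
  have hmul := mul_le_mul_of_nonneg_left h0
    (by positivity : (0:ℝ) ≤ η₁ ^ (k+1) / ((k.factorial : ℕ) : ℝ))
  refine le_trans (le_of_eq ?_) hmul
  unfold svVk
  rw [show (η₁*(lam*t)*p)^(k+1) = η₁^(k+1) * (lam*t)^(k+1) * p^(k+1) from by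
    rw [mul_pow, mul_pow]]
  have hf2 : (((k+1).factorial : ℕ) : ℝ) ≠ 0 := by
    exact_mod_cast (k+1).factorial_pos.ne'
  have hf3 : ((k.factorial : ℕ) : ℝ) ≠ 0 := by
    exact_mod_cast k.factorial_pos.ne'
  field_simp

lemma Qcoef_eq_Pcoef (η₁ η₂ p q : ℝ) (n k : ℕ) :
    Qcoef η₁ η₂ p q n k = Pcoef η₂ η₁ q p n k := by
  unfold Qcoef Pcoef
  split
  · rfl
  · refine Finset.sum_congr rfl fun i _ => ?_
    rw [add_comm η₂ η₁]
    ring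

lemma bCoef_eq_aCoef (lam t η₁ η₂ p q : ℝ) (k : ℕ) :
    bCoef lam t η₁ η₂ p q k = aCoef lam t η₂ η₁ q p k := by
  unfold bCoef aCoef
  congr 1
  exact tsum_congr fun m => by rw [Qcoef_eq_Pcoef]

end SVa

/-- Lemma: `x ↦ H₁(t,x)` and `x ↦ H₂(t,1/x)` are slowly varying with
remainder `g(x) = (log x)^{−1/2}`: for every `λ' > 1`,
`H₁(t,λ'x)/H₁(t,x) − 1 = O((log x)^{−1/2})` as `x → ∞`, and similarly for
`x ↦ H₂(t,1/x)`. -/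
theorem H_functions_slowly_varying_with_remainder
    (t lam η₁ η₂ p q : ℝ)
    (ht : 0 < t) (hlam : 0 < lam) (hη₁ : 1 < η₁) (hη₂ : 0 < η₂)
    (hp : 0 < p) (hq : 0 < q) (hpq : p + q = 1) :
    ∀ lam' : ℝ, 1 < lam' →
      ((fun x => H1fun lam t η₁ η₂ p q (lam' * x) / H1fun lam t η₁ η₂ p q x - 1)
          =O[atTop] fun x => Real.log x ^ (-(1:ℝ)/2)) ∧
      ((fun x => H2fun lam t η₁ η₂ p q (lam' * x)⁻¹ / H2fun lam t η₁ η₂ p q x⁻¹ - 1)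
          =O[atTop] fun x => Real.log x ^ (-(1:ℝ)/2)) := by
  intro lam' hlam'
  have hL : 0 < lam * t := mul_pos hlam ht
  have hη₁0 : 0 < η₁ := lt_trans one_pos hη₁
  have hp1 : p ≤ 1 := by linarith
  have hq1 : q ≤ 1 := by linarith
  have hc : 0 < Real.log lam' := Real.log_pos hlam'
  have hlam'0 : (0:ℝ) < lam' := lt_trans one_pos hlam'
  constructor
  · -- the `H₁` part
    have hβ : 0 < η₁ * (lam*t) * p := by positivity
    have hbig := sv_ratio hβ (Real.exp_pos (-(lam*t)))
      (d := aCoef lam t η₁ η₂ p q)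
      (fun k => sv_aCoef_lower hη₁0 hη₂ hp hp1 hq.le hq1 hL k)
      (fun k => sv_aCoef_upper hη₁0 hη₂ hp hp1 hq.le hq1 hL k) hc
    have hcomp := hbig.comp_tendsto Real.tendsto_log_atTop
    refine Filter.EventuallyEq.trans_isBigO ?_ hcomp
    filter_upwards [Filter.eventually_gt_atTop (0:ℝ)] with x hx
    have hlog : Real.log (lam' * x) = Real.log x + Real.log lam' := by
      rw [Real.log_mul hlam'0.ne' hx.ne']; ring
    simp only [Function.comp_apply, H1fun, G1, hlog]
  · -- the `H₂` part
    have hβ : 0 < η₂ * (lam*t) * q := by positivity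
    have hbig := sv_ratio hβ (Real.exp_pos (-(lam*t)))
      (d := aCoef lam t η₂ η₁ q p)
      (fun k => sv_aCoef_lower hη₂ hη₁0 hq hq1 hp.le hp1 hL k)
      (fun k => sv_aCoef_upper hη₂ hη₁0 hq hq1 hp.le hp1 hL k) hc
    have hcomp := hbig.comp_tendsto Real.tendsto_log_atTop
    refine Filter.EventuallyEq.trans_isBigO ?_ hcomp
    filter_upwards [Filter.eventually_gt_atTop (0:ℝ)] with x hx
    have hlog : Real.log (lam' * x) = Real.log x + Real.log lam' := by
      rw [Real.log_mul hlam'0.ne' hx.ne']; ring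
    simp only [Function.comp_apply, H2fun, G2m, inv_inv, bCoef_eq_aCoef, hlog]
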